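/- arXiv:1309.6224 — 2 statements merged into one kernel-verified Lean document; each statement's English description precedes it below -/
import Mathlib

section
/- Fix b∈ℕ, n∈ℕ and M∈ℕ. Let B and B̃ be two semi-infinite matrices with B_{rs}=0 and B̃_{rs}=0 whenever |r−s|>b, and suppose B_{rs}=B̃_{rs} for every pair (r,s) with |r−n|≤bM and |s−n|≤bM. Then C_m^{(n)}(B)=C_m^{(n)}(B̃) for every m=2,…,M. (Equivalently: for m≤M, C_m^{(n)}(B) does not depend on any entry B_{rs} with |r−n|>bM or |s−n|>bM.) -/
/-! For `k < n`, the entry `(B^{l_1} P_n ⋯ P_n B^{l_j} − B^m)_{kk}` is minus the weighted sum over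
the paths `k → k` of `m` steps of length `≤ b` that sit at an index `≥ n` at one of the times
`l_1, l_1 + l_2, …`: the paths staying below `n` at all these times are counted equally by both
terms. Such a path starts and ends below `n` and passes through `[n, ∞)`, so it never leaves
`[n - bm, n + bm)`, where `B` and `B'` agree. The induction peels off one factor at a time, using
`B^l P_n X − B^l B^s = B^l P_n (X − B^s) − B^l (1 − P_n) B^s`. -/

noncomputable section

/-- Entrywise product of semi-infinite matrices (finite sums in the banded case). -/
def matMul (A B : ℕ → ℕ → ℝ) : ℕ → ℕ → ℝ := fun r s => ∑' k, A r k * B k s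

/-- Powers of a semi-infinite matrix. -/
def matPow (A : ℕ → ℕ → ℝ) : ℕ → ℕ → ℕ → ℝ
  | 0 => fun r s => if r = s then 1 else 0
  | m + 1 => matMul A (matPow A m)

/-- The coordinate projection `P_n` as a semi-infinite matrix. -/
def projMat (n : ℕ) : ℕ → ℕ → ℝ := fun r s => if r = s ∧ r < n then 1 else 0

/-- The matrix chain `B^{l_1} P_n B^{l_2} P_n ⋯ P_n B^{l_j}` for a list `[l_1, …, l_j]`. -/
def chainMat (B : ℕ → ℕ → ℝ) (n : ℕ) : List ℕ → (ℕ → ℕ → ℝ)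
  | [] => fun r s => if r = s then 1 else 0
  | [l] => matPow B l
  | l :: ls => matMul (matPow B l) (matMul (projMat n) (chainMat B n ls))

/-- `Tr(B^{l_1} P_n ⋯ B^{l_j} P_n) = ∑_{k<n} ⟨e_k, B^{l_1} P_n ⋯ B^{l_j} e_k⟩`. -/
def trChain (B : ℕ → ℕ → ℝ) (n : ℕ) (l : List ℕ) : ℝ :=
  ∑ k ∈ Finset.range n, chainMat B n l k k

/-- Compositions of `m` into `j` positive parts. -/
def comps (j m : ℕ) : Finset (Fin j → ℕ) :=
  Finset.filter (fun l => (∀ i, 1 ≤ l i) ∧ ∑ i, l i = m)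
    (Fintype.piFinset fun _ => Finset.range (m + 1))

/-- The quantity `C_m^{(n)}(B)` (with the `Tr B^m P_n` subtraction and `j` starting at `2`). -/
def Cmn (B : ℕ → ℕ → ℝ) (n m : ℕ) : ℝ :=
  ∑ j ∈ Finset.Icc 2 m, ((-1 : ℝ) ^ j / j) *
    ∑ l ∈ comps j m,
      (trChain B n (List.ofFn l) - trChain B n [m]) / ((∏ i, Nat.factorial (l i) : ℕ) : ℝ)

open Finset

def IsBanded (a : ℕ) (A : ℕ → ℕ → ℝ) : Prop :=
  ∀ r s : ℕ, (a : ℤ) < |(r : ℤ) - (s : ℤ)| → A r s = 0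

theorem isBanded_iff {a : ℕ} {A : ℕ → ℕ → ℝ} :
    IsBanded a A ↔ ∀ r s : ℕ, ¬(r ≤ s + a ∧ s ≤ r + a) → A r s = 0 := by
  refine forall₂_congr fun r s => imp_congr_left ?_
  rw [lt_abs]
  omega

namespace IsBanded

variable {a b c : ℕ} {A B C : ℕ → ℕ → ℝ}

theorem apply_eq_zero (hA : IsBanded a A) {r s : ℕ} (h : ¬(r ≤ s + a ∧ s ≤ r + a)) :
    A r s = 0 :=
  isBanded_iff.1 hA r s h

theorem mul (hA : IsBanded a A) (hC : IsBanded c C) : IsBanded (a + c) (matMul A C) := by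
  refine isBanded_iff.2 fun r s hrs => (tsum_congr fun q => ?_).trans tsum_zero
  by_cases hrq : r ≤ q + a ∧ q ≤ r + a
  · rw [hC.apply_eq_zero (by omega), mul_zero]
  · rw [hA.apply_eq_zero hrq, zero_mul]

theorem pow (hB : IsBanded b B) (l : ℕ) : IsBanded (b * l) (matPow B l) := by
  induction l with
  | zero => exact isBanded_iff.2 fun r s hrs => if_neg (by omega)
  | succ l ih =>
    rw [mul_add_one, add_comm]
    exact hB.mul ih

theorem matMul_eq_sum_of_lt (hA : IsBanded a A) (C : ℕ → ℕ → ℝ) {r N : ℕ} (hN : r + a < N)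
    (s : ℕ) : matMul A C r s = ∑ q ∈ range N, A r q * C q s :=
  tsum_eq_sum fun q hq => by
    rw [hA.apply_eq_zero (by rw [mem_range] at hq; omega), zero_mul]

theorem matMul_eq_sum (hA : IsBanded a A) (C : ℕ → ℕ → ℝ) (r s : ℕ) :
    matMul A C r s = ∑ q ∈ range (r + a + 1), A r q * C q s :=
  hA.matMul_eq_sum_of_lt C (Nat.lt_succ_self _) s

end IsBanded

section Algebra

variable {a b c : ℕ} {A B C : ℕ → ℕ → ℝ}

theorem matPow_zero_matMul (B X : ℕ → ℕ → ℝ) : matMul (matPow B 0) X = X := by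
  ext r s
  refine (tsum_eq_single r fun q hq => ?_).trans (by simp [matPow])
  simp [matPow, Ne.symm hq]

theorem matMul_assoc (hA : IsBanded a A) (hC : IsBanded c C) (D : ℕ → ℕ → ℝ) :
    matMul (matMul A C) D = matMul A (matMul C D) := by
  ext r s
  have hN : r + a < r + a + c + 1 := by omega
  calc matMul (matMul A C) D r s
      = ∑ x ∈ range (r + a + c + 1), (∑ q ∈ range (r + a + c + 1), A r q * C q x) * D x s := by
        rw [(hA.mul hC).matMul_eq_sum_of_lt D (N := r + a + c + 1) (by omega)]
        simp only [hA.matMul_eq_sum_of_lt C hN]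
    _ = ∑ q ∈ range (r + a + c + 1), A r q * ∑ x ∈ range (r + a + c + 1), C q x * D x s := by
        simp only [sum_mul, mul_sum, mul_assoc]
        exact sum_comm
    _ = matMul A (matMul C D) r s := by
        rw [hA.matMul_eq_sum_of_lt _ hN]
        refine sum_congr rfl fun q _ => ?_
        by_cases hrq : r ≤ q + a ∧ q ≤ r + a
        · rw [hC.matMul_eq_sum_of_lt D (N := r + a + c + 1) (by omega)]
        · rw [hA.apply_eq_zero hrq, zero_mul, zero_mul]

theorem matPow_add (hB : IsBanded b B) (k l : ℕ) :
    matPow B (k + l) = matMul (matPow B k) (matPow B l) := by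
  induction k with
  | zero => rw [zero_add, matPow_zero_matMul]
  | succ k ih =>
    rw [add_right_comm]
    change matMul B (matPow B (k + l)) = matMul (matMul B (matPow B k)) (matPow B l)
    rw [ih, matMul_assoc hB (hB.pow k)]

theorem matMul_projMat_apply (n : ℕ) (X : ℕ → ℕ → ℝ) (q k : ℕ) :
    matMul (projMat n) X q k = if q < n then X q k else 0 := by
  refine (tsum_eq_single q fun s hs => ?_).trans ?_
  · simp [projMat, Ne.symm hs]
  · by_cases h : q < n <;> simp [projMat, h]

end Algebra

section Locality

variable {b n : ℕ} {B B' : ℕ → ℕ → ℝ}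

theorem matPow_apply_eq_of_eqOn_window (hB : IsBanded b B) (hB' : IsBanded b B') {c R : ℕ}
    (hagree : ∀ r s, c ≤ r + R → r < c + R → c ≤ s + R → s < c + R → B r s = B' r s) (l : ℕ) :
    ∀ r s, c + b * l ≤ max r s + R → min r s + b * l < c + R →
      matPow B l r s = matPow B' l r s := by
  induction l with
  | zero => exact fun _ _ _ _ => rfl
  | succ l ih =>
    intro r s hlo hhi
    refine tsum_congr fun q => ?_
    by_cases hrq : r ≤ q + b ∧ q ≤ r + b
    swap
    · rw [hB.apply_eq_zero hrq, hB'.apply_eq_zero hrq, zero_mul, zero_mul]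
    by_cases hqs : q ≤ s + b * l ∧ s ≤ q + b * l
    swap
    · rw [(hB.pow l).apply_eq_zero hqs, (hB'.pow l).apply_eq_zero hqs, mul_zero, mul_zero]
    rw [mul_add_one] at hlo hhi
    rw [hagree r q (by omega) (by omega) (by omega) (by omega), ih q s (by omega) (by omega)]

theorem chainMat_cons_cons (l l' : ℕ) (ls : List ℕ) :
    chainMat B n (l :: l' :: ls) =
      matMul (matPow B l) (matMul (projMat n) (chainMat B n (l' :: ls))) :=
  rfl

theorem chainMat_apply_eq_matPow_apply (hB : IsBanded b B) :
    ∀ (ls : List ℕ) (r k : ℕ), r + b * ls.sum < n → chainMat B n ls r k = matPow B ls.sum r k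
  | [], _, _, _ => rfl
  | [_], _, _, _ => rfl
  | l :: l' :: ls, r, k, hr => by
    rw [List.sum_cons, mul_add] at hr
    rw [chainMat_cons_cons, List.sum_cons, matPow_add hB]
    refine tsum_congr fun q => ?_
    by_cases hrq : q ≤ r + b * l
    · rw [matMul_projMat_apply, if_pos (by omega),
        chainMat_apply_eq_matPow_apply hB (l' :: ls) q k (by omega)]
    · rw [(hB.pow l).apply_eq_zero (by omega), zero_mul, zero_mul]

theorem chainMat_cons_cons_sub_matPow_apply (hB : IsBanded b B) (l l' : ℕ) (ls : List ℕ)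
    (r k : ℕ) :
    chainMat B n (l :: l' :: ls) r k - matPow B (l :: l' :: ls).sum r k =
      ∑ q ∈ range (r + b * l + 1), matPow B l r q *
        if q < n then chainMat B n (l' :: ls) q k - matPow B (l' :: ls).sum q k
        else -matPow B (l' :: ls).sum q k := by
  rw [chainMat_cons_cons, List.sum_cons, matPow_add hB, (hB.pow l).matMul_eq_sum,
    (hB.pow l).matMul_eq_sum, ← sum_sub_distrib]
  refine sum_congr rfl fun q _ => ?_
  rw [matMul_projMat_apply]
  split_ifs <;> ring

theorem chainMat_sub_matPow_apply_eq (hB : IsBanded b B) (hB' : IsBanded b B') {M : ℕ}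
    (hagree : ∀ r s, n ≤ r + b * M → r < n + b * M → n ≤ s + b * M → s < n + b * M →
      B r s = B' r s) :
    ∀ ls : List ℕ, ls.sum ≤ M → ∀ r k, r < n → k < n →
      chainMat B n ls r k - matPow B ls.sum r k = chainMat B' n ls r k - matPow B' ls.sum r k
  | [], _, _, _, _, _ => rfl
  | [_], _, _, _, _, _ => by simp [chainMat]
  | l :: l' :: ls, hsum, r, k, hr, hk => by
    have hpow := matPow_apply_eq_of_eqOn_window hB hB' hagree
    have hbM : b * l + b * (l' :: ls).sum ≤ b * M := by
      rw [← mul_add]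
      exact Nat.mul_le_mul_left b hsum
    rw [chainMat_cons_cons_sub_matPow_apply hB, chainMat_cons_cons_sub_matPow_apply hB']
    refine sum_congr rfl fun q _ => ?_
    split_ifs with hqn
    · by_cases hfar : q + b * (l' :: ls).sum < n
      · rw [chainMat_apply_eq_matPow_apply hB _ _ _ hfar,
          chainMat_apply_eq_matPow_apply hB' _ _ _ hfar, sub_self, sub_self, mul_zero, mul_zero]
      · rw [hpow l r q (by omega) (by omega),
          chainMat_sub_matPow_apply_eq hB hB' hagree (l' :: ls) (by simp at hsum ⊢; omega) q k hqn hk]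
    · rw [hpow l r q (by omega) (by omega), hpow _ q k (by omega) (by omega)]

theorem trChain_sub_trChain_sum_eq (hB : IsBanded b B) (hB' : IsBanded b B') {M : ℕ}
    (hagree : ∀ r s, n ≤ r + b * M → r < n + b * M → n ≤ s + b * M → s < n + b * M →
      B r s = B' r s)
    (ls : List ℕ) (hls : ls.sum ≤ M) :
    trChain B n ls - trChain B n [ls.sum] = trChain B' n ls - trChain B' n [ls.sum] := by
  simp only [trChain, ← sum_sub_distrib]
  exact sum_congr rfl fun k hk =>
    chainMat_sub_matPow_apply_eq hB hB' hagree ls hls k k (mem_range.1 hk) (mem_range.1 hk)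

end Locality

/-- Lemma: `C_m^{(n)}(B)` for `m ≤ M` only depends on the entries `B_{rs}`
with `|r-n| ≤ bM` and `|s-n| ≤ bM`. -/
theorem cumulant_locality
    (b n M : ℕ) (B B' : ℕ → ℕ → ℝ)
    (hband : ∀ r s : ℕ, (b : ℤ) < |(r : ℤ) - (s : ℤ)| → B r s = 0)
    (hband' : ∀ r s : ℕ, (b : ℤ) < |(r : ℤ) - (s : ℤ)| → B' r s = 0)
    (hagree : ∀ r s : ℕ, |(r : ℤ) - (n : ℤ)| ≤ (b : ℤ) * M → |(s : ℤ) - (n : ℤ)| ≤ (b : ℤ) * M →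
      B r s = B' r s) :
    ∀ m : ℕ, 2 ≤ m → m ≤ M → Cmn B n m = Cmn B' n m := by
  intro m _ hmM
  have hwindow : ∀ r s, n ≤ r + b * M → r < n + b * M → n ≤ s + b * M → s < n + b * M →
      B r s = B' r s := fun r s hr hr' hs hs' =>
    hagree r s (by rw [← Nat.cast_mul, abs_le]; omega) (by rw [← Nat.cast_mul, abs_le]; omega)
  unfold Cmn
  refine sum_congr rfl fun j _ => congrArg _ (sum_congr rfl fun l hl => ?_)
  have hsum : (List.ofFn l).sum = m := by
    rw [List.sum_ofFn]
    exact (mem_filter.1 hl).2.2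
  rw [← hsum, trChain_sub_trChain_sum_eq hband hband' hwindow _ (hsum ▸ hmM)]

end
end

section
/- Let (B_1^{(n)})_{n∈ℕ} and (B_2^{(n)})_{n∈ℕ} be two sequences of semi-infinite matrices, banded with band widths b_1 and b_2 respectively (B_t^{(n)}_{rs}=0 whenever |r−s|>b_t, for all n), and suppose both sequences have the same right limit B^R along the same subsequence (n_j). Then for every m≥2, the limits lim_{j→∞} C_m^{(n_j)}(B_1^{(n_j)}) and lim_{j→∞} C_m^{(n_j)}(B_2^{(n_j)}) both exist and are equal. -/
noncomputable section

/-!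
Recentring at `n` turns `B^{(n)}` into a two-sided matrix; this preserves products and turns
`P_n` into the projection onto the negative indices. Since `B` is banded with width `b`,
`B^{l_1} P_n ⋯ B^{l_j}` and `B^m` have the same diagonal entries more than `m b` rows before
the cut at `n`, so the trace difference in `C_m^{(n)}` is a sum over the fixed window `[-m b, 0)`
of entries of products of the recentred matrix. Each such entry is a finite sum of products of
entries, hence converges to the same expression in `B^R`: both sequences tend to `C_m` of the
right limit.
-/

namespace RightLimitCumulant

open Finset Filter Topology

-- Two-sided matrices are functions `ℤ → ℤ → ℝ`; `zChain` mirrors `chainMat`, with `P_n`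
-- replaced by `negProj`.
def zMul (A C : ℤ → ℤ → ℝ) : ℤ → ℤ → ℝ := fun r s => ∑' k, A r k * C k s

def zPow (A : ℤ → ℤ → ℝ) : ℕ → ℤ → ℤ → ℝ
  | 0 => fun r s => if r = s then 1 else 0
  | m + 1 => zMul A (zPow A m)

def negProj : ℤ → ℤ → ℝ := fun r s => if r = s ∧ r < 0 then 1 else 0

def zChain (A : ℤ → ℤ → ℝ) : List ℕ → ℤ → ℤ → ℝ
  | [] => fun r s => if r = s then 1 else 0
  | [l] => zPow A l
  | l :: ls => zMul (zPow A l) (zMul negProj (zChain A ls))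

def IsBanded (b : ℕ) (A : ℤ → ℤ → ℝ) : Prop := ∀ r s, (b : ℤ) < |r - s| → A r s = 0

theorem zMul_apply_congr_left {A A' C : ℤ → ℤ → ℝ} {r : ℤ} (h : A r = A' r) (s : ℤ) :
    zMul A C r s = zMul A' C r s := by
  simp only [zMul, h]

section Banded

variable {b c : ℕ} {A C X : ℤ → ℤ → ℝ}

theorem IsBanded.zMul_eq_sum (hA : IsBanded b A) {T : Finset ℤ} {r : ℤ}
    (hT : Icc (r - b) (r + b) ⊆ T) (C : ℤ → ℤ → ℝ) (s : ℤ) :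
    zMul A C r s = ∑ k ∈ T, A r k * C k s :=
  tsum_eq_sum fun k hk => by
    have hk' : k ∉ Icc (r - b) (r + b) := fun h => hk (hT h)
    rw [mem_Icc] at hk'
    rw [hA r k (lt_abs.2 (by omega)), zero_mul]

theorem IsBanded.zMul_congr_right (hA : IsBanded b A) {r s : ℤ} {C' : ℤ → ℤ → ℝ}
    (h : ∀ k ∈ Icc (r - b) (r + b), C k s = C' k s) : zMul A C r s = zMul A C' r s := by
  rw [hA.zMul_eq_sum subset_rfl, hA.zMul_eq_sum subset_rfl]
  exact sum_congr rfl fun k hk => by rw [h k hk]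

theorem IsBanded.mono {b' : ℕ} (hA : IsBanded b A) (h : b ≤ b') : IsBanded b' A :=
  fun r s hrs => hA r s (lt_of_le_of_lt (by exact_mod_cast h) hrs)

theorem IsBanded.zMul (hA : IsBanded b A) (hC : IsBanded c C) : IsBanded (b + c) (zMul A C) := by
  intro r s hrs
  rw [hA.zMul_eq_sum subset_rfl]
  refine sum_eq_zero fun k hk => ?_
  rw [mem_Icc] at hk
  rw [lt_abs] at hrs
  rw [hC k s (lt_abs.2 (by omega)), mul_zero]

theorem isBanded_zPow_zero : IsBanded 0 (zPow A 0) := fun r s hrs =>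
  if_neg fun h => by simp [h] at hrs

theorem isBanded_negProj : IsBanded 0 negProj := fun r s hrs =>
  if_neg fun h => by simp [h.1] at hrs

theorem IsBanded.zPow (hA : IsBanded b A) : ∀ l, IsBanded (l * b) (zPow A l)
  | 0 => by simpa using isBanded_zPow_zero
  | l + 1 => (hA.zMul (hA.zPow l)).mono (by rw [add_mul, one_mul, add_comm])

theorem zMul_zPow_zero_left (A C : ℤ → ℤ → ℝ) : zMul (zPow A 0) C = C := by
  ext r s
  refine (tsum_eq_single r fun k hk => ?_).trans ?_
  · simp [zPow, Ne.symm hk]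
  · simp [zPow]

theorem zMul_assoc (hA : IsBanded b A) (hX : IsBanded c X) (Y : ℤ → ℤ → ℝ) :
    zMul (zMul A X) Y = zMul A (zMul X Y) := by
  ext r s
  have hwindow : ∀ j ∈ Icc (r - b) (r + b),
      Icc (j - c) (j + c) ⊆ Icc (r - (b + c : ℕ)) (r + (b + c : ℕ)) := by
    intro j hj k hk
    simp only [mem_Icc] at hj hk ⊢
    omega
  rw [(hA.zMul hX).zMul_eq_sum subset_rfl, hA.zMul_eq_sum subset_rfl]
  simp_rw [hA.zMul_eq_sum subset_rfl X, sum_mul]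
  rw [sum_comm]
  refine sum_congr rfl fun j hj => ?_
  rw [hX.zMul_eq_sum (hwindow j hj), mul_sum]
  exact sum_congr rfl fun k _ => by ring

theorem zMul_zPow_zPow (hA : IsBanded b A) (a c : ℕ) :
    zMul (zPow A a) (zPow A c) = zPow A (a + c) := by
  induction a with
  | zero => rw [zMul_zPow_zero_left, zero_add]
  | succ a ih =>
    rw [Nat.succ_add, zPow, zPow, zMul_assoc hA (hA.zPow a), ih]

theorem negProj_zMul (Z : ℤ → ℤ → ℝ) (k s : ℤ) :
    zMul negProj Z k s = if k < 0 then Z k s else 0 := by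
  refine (tsum_eq_single k fun k' hk' => ?_).trans ?_
  · simp [negProj, Ne.symm hk']
  · by_cases hk : k < 0 <;> simp [negProj, hk]

theorem zChain_eq_zPow_sum (hA : IsBanded b A) (L : List ℕ) (hL : L ≠ []) (r s : ℤ)
    (hr : r + (L.sum * b : ℕ) < 0) : zChain A L r s = zPow A L.sum r s := by
  induction L generalizing r with
  | nil => exact absurd rfl hL
  | cons l ls ih =>
    rcases ls with _ | ⟨l', ls⟩
    · simp [zChain]
    · have hsum : (l :: l' :: ls).sum * b = l * b + (l' :: ls).sum * b := by
        rw [List.sum_cons, add_mul]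
      rw [hsum, Nat.cast_add] at hr
      calc zChain A (l :: l' :: ls) r s
          = zMul (zPow A l) (zPow A (l' :: ls).sum) r s := by
            refine (hA.zPow l).zMul_congr_right fun k hk => ?_
            rw [mem_Icc] at hk
            rw [negProj_zMul, if_pos (by omega), ih (List.cons_ne_nil _ _) k (by omega)]
        _ = zPow A (l :: l' :: ls).sum r s := by
            rw [zMul_zPow_zPow hA, ← List.sum_cons]

end Banded

/-- The paper's `C_m` of a two-sided matrix, with the traces `Tr(⋯ P_n)` replaced by sums of
diagonal entries over the window `[-w, 0)` of negative indices. -/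
def rightCumulant (A : ℤ → ℤ → ℝ) (w m : ℕ) : ℝ :=
  ∑ j ∈ Icc 2 m, ((-1 : ℝ) ^ j / j) *
    ∑ l ∈ comps j m,
      (∑ t ∈ Ico (-(w : ℤ)) 0, (zChain A (List.ofFn l) t t - zPow A m t t)) /
        ((∏ i, Nat.factorial (l i) : ℕ) : ℝ)

section Convergence

variable {ι : Type*} {F : Filter ι} {b : ℕ} {A : ι → ℤ → ℤ → ℝ} {A₀ : ℤ → ℤ → ℝ}

theorem IsBanded.of_tendsto [F.NeBot] (hb : ∀ i, IsBanded b (A i)) (hA : Tendsto A F (𝓝 A₀)) :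
    IsBanded b A₀ := fun r s hrs =>
  tendsto_nhds_unique ((hA.apply_nhds r).apply_nhds s) (by simp [hb _ r s hrs])

theorem tendsto_zMul [F.NeBot] {C : ι → ℤ → ℤ → ℝ} {C₀ : ℤ → ℤ → ℝ} (hb : ∀ i, IsBanded b (A i))
    (hA : Tendsto A F (𝓝 A₀)) (hC : Tendsto C F (𝓝 C₀)) :
    Tendsto (fun i => zMul (A i) (C i)) F (𝓝 (zMul A₀ C₀)) := by
  refine tendsto_pi_nhds.2 fun r => tendsto_pi_nhds.2 fun s => ?_
  simp_rw [(hb _).zMul_eq_sum subset_rfl, (IsBanded.of_tendsto hb hA).zMul_eq_sum subset_rfl]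
  exact tendsto_finsetSum _ fun k _ =>
    ((hA.apply_nhds r).apply_nhds k).mul ((hC.apply_nhds k).apply_nhds s)

theorem tendsto_zPow [F.NeBot] (hb : ∀ i, IsBanded b (A i)) (hA : Tendsto A F (𝓝 A₀)) (l : ℕ) :
    Tendsto (fun i => zPow (A i) l) F (𝓝 (zPow A₀ l)) := by
  induction l with
  | zero => exact tendsto_const_nhds
  | succ l ih => exact tendsto_zMul hb hA ih

theorem tendsto_zChain [F.NeBot] (hb : ∀ i, IsBanded b (A i)) (hA : Tendsto A F (𝓝 A₀))
    (L : List ℕ) : Tendsto (fun i => zChain (A i) L) F (𝓝 (zChain A₀ L)) := by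
  induction L with
  | nil => exact tendsto_const_nhds
  | cons l ls ih =>
    rcases ls with _ | ⟨l', ls⟩
    · exact tendsto_zPow hb hA l
    · exact tendsto_zMul (fun i => (hb i).zPow l) (tendsto_zPow hb hA l)
        (tendsto_zMul (fun _ => isBanded_negProj) tendsto_const_nhds ih)

theorem tendsto_rightCumulant [F.NeBot] (hb : ∀ i, IsBanded b (A i)) (hA : Tendsto A F (𝓝 A₀))
    (w m : ℕ) : Tendsto (fun i => rightCumulant (A i) w m) F (𝓝 (rightCumulant A₀ w m)) := by
  unfold rightCumulant
  refine tendsto_finsetSum _ fun j _ => (tendsto_finsetSum _ fun l _ => ?_).const_mul _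
  refine (tendsto_finsetSum _ fun t _ => ?_).div_const _
  exact (((tendsto_zChain hb hA _).apply_nhds t).apply_nhds t).sub
    (((tendsto_zPow hb hA m).apply_nhds t).apply_nhds t)

end Convergence

/-- `recenter n B r s = B (n + r) (n + s)`, extended by zero. The zero extension makes
`recenter n` multiplicative, but it is the identity only on rows `r ≥ -n`: hence the hypotheses
`0 ≤ n + r` below. -/
def recenter (n : ℕ) (B : ℕ → ℕ → ℝ) : ℤ → ℤ → ℝ := fun r s =>
  if 0 ≤ (n : ℤ) + r ∧ 0 ≤ (n : ℤ) + s then B ((n : ℤ) + r).toNat ((n : ℤ) + s).toNat else 0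

section Recenter

variable {n : ℕ} {B : ℕ → ℕ → ℝ}

theorem recenter_matMul (n : ℕ) (B C : ℕ → ℕ → ℝ) :
    recenter n (matMul B C) = zMul (recenter n B) (recenter n C) := by
  ext r s
  by_cases hrs : 0 ≤ (n : ℤ) + r ∧ 0 ≤ (n : ℤ) + s
  · have hinj : Function.Injective fun k : ℕ => (k : ℤ) - n := fun k k' h => by simpa using h
    rw [recenter, if_pos hrs, zMul,
      ← hinj.tsum_eq (f := fun k => recenter n B r k * recenter n C k s)]
    · refine tsum_congr fun k => ?_
      simp [recenter, hrs]
    · intro k hk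
      by_cases hk' : 0 ≤ (n : ℤ) + k
      · exact ⟨(n + k).toNat, by simp; omega⟩
      · simp [recenter, hk'] at hk
  · rw [recenter, if_neg hrs, zMul]
    refine ((tsum_congr fun k => ?_).trans tsum_zero).symm
    by_cases hr : 0 ≤ (n : ℤ) + r
    · have hs : ¬0 ≤ (n : ℤ) + s := fun hs => hrs ⟨hr, hs⟩
      simp [recenter, hs]
    · simp [recenter, hr]

theorem recenter_matMul_apply {X : ℕ → ℕ → ℝ} {X' : ℤ → ℤ → ℝ}
    (hX : ∀ k, 0 ≤ (n : ℤ) + k → recenter n X k = X' k) (r s : ℤ) :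
    recenter n (matMul B X) r s = zMul (recenter n B) X' r s := by
  rw [recenter_matMul]
  refine tsum_congr fun k => ?_
  by_cases hk : 0 ≤ (n : ℤ) + k
  · rw [hX k hk]
  · simp [recenter, hk]

theorem recenter_matPow (l : ℕ) (r : ℤ) (hr : 0 ≤ (n : ℤ) + r) :
    recenter n (matPow B l) r = zPow (recenter n B) l r := by
  induction l generalizing r with
  | zero =>
    ext s
    by_cases hs : 0 ≤ (n : ℤ) + s
    · simp only [recenter, matPow, zPow, hr, hs, true_and, if_true]
      congr 1
      exact propext (by omega)
    · simp [recenter, zPow, hs]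
      omega
  | succ l ih => exact funext (recenter_matMul_apply ih r)

theorem recenter_projMat (r : ℤ) (hr : 0 ≤ (n : ℤ) + r) : recenter n (projMat n) r = negProj r := by
  ext s
  by_cases hs : 0 ≤ (n : ℤ) + s
  · simp only [recenter, projMat, negProj, hr, hs, true_and, if_true]
    congr 1
    exact propext (by omega)
  · simp [recenter, negProj, hs]
    omega

theorem recenter_chainMat (L : List ℕ) (r : ℤ) (hr : 0 ≤ (n : ℤ) + r) :
    recenter n (chainMat B n L) r = zChain (recenter n B) L r := by
  induction L generalizing r with
  | nil => exact recenter_matPow (B := B) 0 r hr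
  | cons l ls ih =>
    rcases ls with _ | ⟨l', ls⟩
    · exact recenter_matPow l r hr
    · ext s
      have hinner : ∀ k, 0 ≤ (n : ℤ) + k →
          recenter n (matMul (projMat n) (chainMat B n (l' :: ls))) k =
            zMul negProj (zChain (recenter n B) (l' :: ls)) k := fun k hk => funext fun s => by
        rw [recenter_matMul_apply ih, zMul_apply_congr_left (recenter_projMat k hk)]
      exact (recenter_matMul_apply hinner r s).trans
        (zMul_apply_congr_left (recenter_matPow l r hr) s)

theorem sum_range_eq_sum_recenter (n : ℕ) (X : ℕ → ℕ → ℝ) :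
    ∑ k ∈ range n, X k k = ∑ t ∈ Ico (-(n : ℤ)) 0, recenter n X t t := by
  refine sum_nbij' (fun k => (k : ℤ) - n) (fun t => ((n : ℤ) + t).toNat) ?_ ?_ ?_ ?_ ?_
    <;> intro a ha <;> simp only [mem_range, mem_Ico] at ha ⊢
  · omega
  · omega
  · omega
  · omega
  · simp [recenter]

theorem trChain_eq_sum_zChain (B : ℕ → ℕ → ℝ) (n : ℕ) (L : List ℕ) :
    trChain B n L = ∑ t ∈ Ico (-(n : ℤ)) 0, zChain (recenter n B) L t t := by
  rw [trChain, sum_range_eq_sum_recenter]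
  refine sum_congr rfl fun t ht => ?_
  rw [recenter_chainMat L t (by rw [mem_Ico] at ht; omega)]

theorem isBanded_recenter {b : ℕ} (hB : ∀ r s : ℕ, (b : ℤ) < |(r : ℤ) - (s : ℤ)| → B r s = 0)
    (n : ℕ) : IsBanded b (recenter n B) := by
  intro r s hrs
  unfold recenter
  split_ifs with h
  · refine hB _ _ ?_
    rwa [Int.toNat_of_nonneg h.1, Int.toNat_of_nonneg h.2, add_sub_add_left_eq_sub]
  · rfl

theorem trChain_sub_trChain_eq {b w : ℕ}
    (hB : ∀ r s : ℕ, (b : ℤ) < |(r : ℤ) - (s : ℤ)| → B r s = 0) {L : List ℕ} (hL : L ≠ [])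
    (hw : L.sum * b ≤ w) (hwn : w ≤ n) :
    trChain B n L - trChain B n [L.sum] = ∑ t ∈ Ico (-(w : ℤ)) 0,
      (zChain (recenter n B) L t t - zPow (recenter n B) L.sum t t) := by
  rw [trChain_eq_sum_zChain, trChain_eq_sum_zChain, ← sum_sub_distrib]
  refine (sum_subset (Ico_subset_Ico (by omega) le_rfl) fun t ht htw => ?_).symm
  simp only [mem_Ico, not_and, not_lt] at ht htw
  rw [zChain_eq_zPow_sum (isBanded_recenter hB n) L hL t t (by omega)]
  exact sub_self _

theorem Cmn_eq_rightCumulant {b w m : ℕ}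
    (hB : ∀ r s : ℕ, (b : ℤ) < |(r : ℤ) - (s : ℤ)| → B r s = 0) (hw : m * b ≤ w) (hwn : w ≤ n) :
    Cmn B n m = rightCumulant (recenter n B) w m := by
  refine sum_congr rfl fun j hj => congrArg _ (sum_congr rfl fun l hl => ?_)
  simp only [comps, mem_filter] at hl
  have hsum : (List.ofFn l).sum = m := by rw [List.sum_ofFn, hl.2.2]
  have hne : List.ofFn l ≠ [] := by
    rw [Ne, List.ofFn_eq_nil_iff]
    rw [mem_Icc] at hj
    omega
  rw [← hsum, trChain_sub_trChain_eq hB hne (hsum ▸ hw) hwn]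

end Recenter

theorem tendsto_recenter_of_rightLimit {ι : Type*} {F : Filter ι} {B : ι → ℕ → ℕ → ℝ}
    {BR : ℤ → ℤ → ℝ} {n : ι → ℕ} (hn : Tendsto n F atTop)
    (hlim : ∀ r s : ℤ, Tendsto (fun i => B i ((n i : ℤ) + r).toNat ((n i : ℤ) + s).toNat) F
      (𝓝 (BR r s))) :
    Tendsto (fun i => recenter (n i) (B i)) F (𝓝 BR) := by
  refine tendsto_pi_nhds.2 fun r => tendsto_pi_nhds.2 fun s => (hlim r s).congr' ?_
  filter_upwards [hn.eventually_ge_atTop (max r.natAbs s.natAbs)] with i hi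
  exact (if_pos (by omega)).symm

theorem tendsto_Cmn_of_rightLimit {b w m : ℕ} (hw : m * b ≤ w) {B : ℕ → ℕ → ℕ → ℝ}
    (hB : ∀ n r s : ℕ, (b : ℤ) < |(r : ℤ) - (s : ℤ)| → B n r s = 0) {BR : ℤ → ℤ → ℝ}
    {nseq : ℕ → ℕ} (hmono : StrictMono nseq)
    (hlim : ∀ r s : ℤ, Tendsto (fun j => B (nseq j) ((nseq j : ℤ) + r).toNat
      ((nseq j : ℤ) + s).toNat) atTop (𝓝 (BR r s))) :
    Tendsto (fun j => Cmn (B (nseq j)) (nseq j) m) atTop (𝓝 (rightCumulant BR w m)) := by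
  refine (tendsto_rightCumulant (fun j => isBanded_recenter (hB _) _)
    (tendsto_recenter_of_rightLimit hmono.tendsto_atTop hlim) w m).congr' ?_
  filter_upwards [hmono.tendsto_atTop.eventually_ge_atTop w] with j hj
  exact (Cmn_eq_rightCumulant (hB _) hw hj).symm

end RightLimitCumulant

theorem cumulants_limit_eq_of_same_rightLimit_general
    (b₁ b₂ : ℕ) (B₁ B₂ : ℕ → ℕ → ℕ → ℝ)
    (hband₁ : ∀ n r s : ℕ, (b₁ : ℤ) < |(r : ℤ) - (s : ℤ)| → B₁ n r s = 0)
    (hband₂ : ∀ n r s : ℕ, (b₂ : ℤ) < |(r : ℤ) - (s : ℤ)| → B₂ n r s = 0)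
    (BR : ℤ → ℤ → ℝ)
    (nseq : ℕ → ℕ) (hmono : StrictMono nseq)
    (hrightlim₁ : ∀ r s : ℤ,
      Filter.Tendsto (fun j => B₁ (nseq j) ((nseq j : ℤ) + r).toNat ((nseq j : ℤ) + s).toNat)
        Filter.atTop (nhds (BR r s)))
    (hrightlim₂ : ∀ r s : ℤ,
      Filter.Tendsto (fun j => B₂ (nseq j) ((nseq j : ℤ) + r).toNat ((nseq j : ℤ) + s).toNat)
        Filter.atTop (nhds (BR r s))) :
    ∀ m : ℕ, 2 ≤ m → ∃ L : ℝ,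
      Filter.Tendsto (fun j => Cmn (B₁ (nseq j)) (nseq j) m) Filter.atTop (nhds L) ∧
      Filter.Tendsto (fun j => Cmn (B₂ (nseq j)) (nseq j) m) Filter.atTop (nhds L) := by
  intro m _
  exact ⟨RightLimitCumulant.rightCumulant BR (m * b₁ + m * b₂) m,
    RightLimitCumulant.tendsto_Cmn_of_rightLimit (Nat.le_add_right _ _) hband₁ hmono hrightlim₁,
    RightLimitCumulant.tendsto_Cmn_of_rightLimit (Nat.le_add_left _ _) hband₂ hmono hrightlim₂⟩

/-- Lemma: two banded sequences with the same right limit have the same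
limiting cumulants. -/
theorem cumulants_limit_eq_of_same_rightLimit
    (b₁ b₂ : ℕ) (B₁ B₂ : ℕ → ℕ → ℕ → ℝ)
    (hband₁ : ∀ n r s : ℕ, (b₁ : ℤ) < |(r : ℤ) - (s : ℤ)| → B₁ n r s = 0)
    (hband₂ : ∀ n r s : ℕ, (b₂ : ℤ) < |(r : ℤ) - (s : ℤ)| → B₂ n r s = 0)
    (BR : ℤ → ℤ → ℝ) (hBRbdd : ∃ C : ℝ, ∀ r s : ℤ, |BR r s| ≤ C)
    (nseq : ℕ → ℕ) (hmono : StrictMono nseq)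
    (hrightlim₁ : ∀ r s : ℤ,
      Filter.Tendsto (fun j => B₁ (nseq j) ((nseq j : ℤ) + r).toNat ((nseq j : ℤ) + s).toNat)
        Filter.atTop (nhds (BR r s)))
    (hrightlim₂ : ∀ r s : ℤ,
      Filter.Tendsto (fun j => B₂ (nseq j) ((nseq j : ℤ) + r).toNat ((nseq j : ℤ) + s).toNat)
        Filter.atTop (nhds (BR r s))) :
    ∀ m : ℕ, 2 ≤ m → ∃ L : ℝ,
      Filter.Tendsto (fun j => Cmn (B₁ (nseq j)) (nseq j) m) Filter.atTop (nhds L) ∧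
      Filter.Tendsto (fun j => Cmn (B₂ (nseq j)) (nseq j) m) Filter.atTop (nhds L) :=
  cumulants_limit_eq_of_same_rightLimit_general b₁ b₂ B₁ B₂ hband₁ hband₂ BR nseq hmono hrightlim₁
    hrightlim₂

end
end
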